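/- arXiv:2012.01004 — 2 statements merged into one kernel-verified Lean document; each statement's English description precedes it below -/
import Mathlib

section
/- If the weight profile w is distinct (all weights pairwise different), then at every problem (P, q) there is at most one w-popular matching, and when one exists it equals the outcome of the serial dictatorship that processes the agents in strictly decreasing order of their weights. -/
open scoped Classical

section Defs

variable {I O : Type} [Fintype I] [Fintype O]

/-- A mechanism maps each problem (preference profile, capacity profile) to an assignment. -/
abbrev Mechanism (I O : Type) : Type :=
  (I → LinearOrder (Option O)) → (O → ℕ) → I → Option O

/-- `x` is strictly preferred to `y` under the strict preference (linear order) `p`,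
where `none` represents being unassigned (∅). -/
def Prefers (p : LinearOrder (Option O)) (x y : Option O) : Prop := p.lt y x

/-- A matching: each object `a` is assigned to at most `q a` agents. -/
def IsMatching (q : O → ℕ) (μ : I → Option O) : Prop :=
  ∀ a : O, (Finset.univ.filter fun i : I => μ i = some a).card ≤ q a

/-- Every object has capacity at least one. -/
def ValidCaps (q : O → ℕ) : Prop := ∀ a : O, 1 ≤ q a

/-- `μ` is more w-popular than `μ'`. -/
def MoreWPopular (w : I → ℝ) (P : I → LinearOrder (Option O)) (μ μ' : I → Option O) : Prop :=
  (∑ j ∈ Finset.univ.filter fun j : I => Prefers (P j) (μ' j) (μ j), w j)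
    < ∑ i ∈ Finset.univ.filter fun i : I => Prefers (P i) (μ i) (μ' i), w i

/-- `μ` is a w-popular matching for problem `(P, q)`. -/
def WPopular (w : I → ℝ) (P : I → LinearOrder (Option O)) (q : O → ℕ)
    (μ : I → Option O) : Prop :=
  IsMatching q μ ∧ ∀ μ', IsMatching q μ' → ¬ MoreWPopular w P μ' μ

/-- `μ` is more popular than `μ'` (unweighted, counting agents). -/
def MorePopular (P : I → LinearOrder (Option O)) (μ μ' : I → Option O) : Prop :=
  (Finset.univ.filter fun j : I => Prefers (P j) (μ' j) (μ j)).card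
    < (Finset.univ.filter fun i : I => Prefers (P i) (μ i) (μ' i)).card

/-- `μ` is a popular matching for problem `(P, q)`. -/
def Popular (P : I → LinearOrder (Option O)) (q : O → ℕ) (μ : I → Option O) : Prop :=
  IsMatching q μ ∧ ∀ μ', IsMatching q μ' → ¬ MorePopular P μ' μ

/-- `μ'` Pareto improves upon `μ`. -/
def ParetoImproves (P : I → LinearOrder (Option O)) (μ' μ : I → Option O) : Prop :=
  (∀ i : I, (P i).le (μ i) (μ' i)) ∧ ∃ j : I, Prefers (P j) (μ' j) (μ j)

/-- `μ` is non-wasteful: no agent prefers an object with unfilled capacity to her assignment. -/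
def NonWasteful (P : I → LinearOrder (Option O)) (q : O → ℕ) (μ : I → Option O) : Prop :=
  ∀ (i : I) (a : O), (Finset.univ.filter fun j : I => μ j = some a).card < q a →
    ¬ Prefers (P i) (some a) (μ i)

/-- The enumeration `e` lists the agents in weakly decreasing order of weight. -/
def DecreasingEnum (w : I → ℝ) (e : Fin (Fintype.card I) ≃ I) : Prop :=
  ∀ j k : Fin (Fintype.card I), j ≤ k → w (e k) ≤ w (e j)

/-- The weight profile is cumulatively ordered (w.r.t. the decreasing enumeration `e`):
each agent's weight is at least the sum of the weights of all later agents. -/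
def CumulativelyOrdered (w : I → ℝ) (e : Fin (Fintype.card I) ≃ I) : Prop :=
  ∀ j : Fin (Fintype.card I),
    (∑ k ∈ Finset.univ.filter fun k : Fin (Fintype.card I) => j < k, w (e k)) ≤ w (e j)

/-- All weights are pairwise different. -/
def DistinctWeights (w : I → ℝ) : Prop := Function.Injective w

/-- Essentially distinct (w.r.t. the decreasing enumeration `e`): all weights except possibly
the last two are pairwise different, the last two are equal, and the third-from-last weight is
at least the sum of the last two.  (Paper indices `i_1, …, i_n` correspond to `e 0, …, e (n-1)`.) -/
def EssentiallyDistinct (w : I → ℝ) (e : Fin (Fintype.card I) ≃ I) : Prop :=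
  (∀ j k : Fin (Fintype.card I), j < k → (k : ℕ) + 2 ≤ Fintype.card I → w (e j) ≠ w (e k)) ∧
  (∀ j k : Fin (Fintype.card I), (j : ℕ) + 2 = Fintype.card I → (k : ℕ) + 1 = Fintype.card I →
    w (e j) = w (e k)) ∧
  (∀ j k l : Fin (Fintype.card I), (j : ℕ) + 3 = Fintype.card I →
    (k : ℕ) + 2 = Fintype.card I → (l : ℕ) + 1 = Fintype.card I →
    w (e k) + w (e l) ≤ w (e j))

/-- The most preferred element (under `p`) of `{∅} ∪ {objects with remaining capacity}`. -/
noncomputable def sdChoice (p : LinearOrder (Option O)) (rem : O → ℕ) : Option O :=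
  @Finset.max' (Option O) p
    (insert none ((Finset.univ.filter fun a : O => 0 < rem a).image some))
    ⟨none, Finset.mem_insert_self _ _⟩

/-- State of the serial dictatorship after the first `k` agents (in the order `e`) have picked:
the partial assignment and the remaining capacities. -/
noncomputable def sdState (e : Fin (Fintype.card I) ≃ I)
    (P : I → LinearOrder (Option O)) (q : O → ℕ) : ℕ → (I → Option O) × (O → ℕ)
  | 0 => (fun _ => none, q)
  | k + 1 =>
    let prev := sdState e P q k
    if h : k < Fintype.card I then
      let i := e ⟨k, h⟩
      let c := sdChoice (P i) prev.2
      (Function.update prev.1 i c, fun a => if c = some a then prev.2 a - 1 else prev.2 a)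
    else prev

/-- The outcome of the serial dictatorship with agent ordering `e` at problem `(P, q)`:
agents pick, one by one in the order `e`, their most preferred acceptable object with
remaining capacity (and get ∅ if none remains). -/
noncomputable def SD (e : Fin (Fintype.card I) ≃ I)
    (P : I → LinearOrder (Option O)) (q : O → ℕ) : I → Option O :=
  (sdState e P q (Fintype.card I)).1

/-- An agent ordering is consistent with the weight profile `w` if agents with strictly larger
weight come strictly earlier. -/
def ConsistentOrder (w : I → ℝ) (e : Fin (Fintype.card I) ≃ I) : Prop :=
  ∀ i j : I, w j < w i → e.symm i < e.symm j

/-- A mechanism always produces a matching. -/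
def IsMechanism (ψ : Mechanism I O) : Prop :=
  ∀ P q, ValidCaps q → IsMatching q (ψ P q)

/-- Strategy-proofness: no agent can ever obtain a strictly preferred assignment
by misreporting. -/
def StrategyProof (ψ : Mechanism I O) : Prop :=
  ∀ P q, ValidCaps q → ∀ (i : I) (P'i : LinearOrder (Option O)),
    ¬ Prefers (P i) (ψ (Function.update P i P'i) q i) (ψ P q i)

/-- A mechanism is w-popular if its outcome is w-popular whenever a w-popular matching exists. -/
def WPopularMech (w : I → ℝ) (ψ : Mechanism I O) : Prop :=
  ∀ P q, ValidCaps q → (∃ μ, WPopular w P q μ) → WPopular w P q (ψ P q)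

/-- A mechanism is popular if its outcome is popular whenever a popular matching exists. -/
def PopularMech (ψ : Mechanism I O) : Prop :=
  ∀ P q, ValidCaps q → (∃ μ, Popular P q μ) → Popular P q (ψ P q)

/-- A mechanism is non-wasteful if its outcome is always non-wasteful. -/
def NonWastefulMech (ψ : Mechanism I O) : Prop :=
  ∀ P q, ValidCaps q → NonWasteful P q (ψ P q)

/-- `p` declares `a` as its only acceptable object (the class 𝒫ₐ). -/
def OnlyAcceptable (p : LinearOrder (Option O)) (a : O) : Prop :=
  p.lt none (some a) ∧ ∀ b : O, b ≠ a → p.lt (some b) none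

/-- `p` declares no object acceptable (the class 𝒫_∅). -/
def NothingAcceptable (p : LinearOrder (Option O)) : Prop :=
  ∀ b : O, p.lt (some b) none

/-- Preserving dispute resolutions. -/
def PreservesDisputeResolutions (ψ : Mechanism I O) : Prop :=
  ∀ P q, ValidCaps q → ∀ (i j : I) (a : O) (P'i : LinearOrder (Option O)),
    ψ P q j = some a → Prefers (P i) (some a) (ψ P q i) →
    OnlyAcceptable P'i a → ψ (Function.update P i P'i) q i = none →
    ∀ (P'' : I → LinearOrder (Option O)) (q' : O → ℕ), ValidCaps q' → q' a = 1 →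
      OnlyAcceptable (P'' i) a → OnlyAcceptable (P'' j) a →
      (∀ k : I, k ≠ i → k ≠ j → NothingAcceptable (P'' k)) →
      ψ P'' q' i = none ∧ ψ P'' q' j = some a

/-- `P'` is a (pure) Nash equilibrium of the preference-reporting game induced by `ψ`
at the problem `(P, q)` (true preferences `P`). -/
def NashEq (ψ : Mechanism I O) (P : I → LinearOrder (Option O)) (q : O → ℕ)
    (P' : I → LinearOrder (Option O)) : Prop :=
  ∀ (i : I) (P''i : LinearOrder (Option O)),
    ¬ Prefers (P i) (ψ (Function.update P' i P''i) q i) (ψ P' q i)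

/-- The mechanism admits a Nash equilibrium at every problem. -/
def AdmitsNash (ψ : Mechanism I O) : Prop :=
  ∀ P q, ValidCaps q → ∃ P', NashEq ψ P q P'

/-- w-popularity in equilibrium: every Nash-equilibrium outcome is w-popular
whenever a w-popular matching exists. -/
def WPopularInEquilibrium (w : I → ℝ) (ψ : Mechanism I O) : Prop :=
  ∀ P q, ValidCaps q → ∀ P', NashEq ψ P q P' →
    (∃ μ, WPopular w P q μ) → WPopular w P q (ψ P' q)

end Defs

/-! A w-popular matching `μ` is individually rational and non-wasteful, and no agent prefers the
object of a lighter agent to her own: otherwise evicting the lighter holder and moving the envious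
agent to that object gives a matching in which only the lighter agent loses. For an ordering
consistent with distinct weights this means every agent envies only earlier agents. Such a
matching is the SD outcome: by induction along the ordering, the earlier agents hold exactly their
SD objects, so capacity accounting shows `μ i` is available to `i` at her turn (hence at most
her SD choice), while her SD choice cannot be strictly better, since that object would then be
full in `μ` with some holder served after `i`. -/

lemma Prefers.irrefl {O : Type} (p : LinearOrder (Option O)) (x : Option O) : ¬ Prefers p x x :=
  @lt_irrefl _ p.toPreorder x

lemma Prefers.asymm {O : Type} {p : LinearOrder (Option O)} {x y : Option O}
    (h : Prefers p x y) : ¬ Prefers p y x :=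
  @lt_asymm _ p.toPreorder _ _ h

lemma eq_of_prefers_update {I O : Type} {P : I → LinearOrder (Option O)} {μ : I → Option O}
    {i k : I} {v : Option O} (h : Prefers (P k) (μ k) (Function.update μ i v k)) : k = i := by
  by_contra hk
  rw [Function.update_of_ne hk] at h
  exact Prefers.irrefl _ _ h

section Matchings

variable {I O : Type} [Fintype I]

lemma card_filter_update_add (μ : I → Option O) (i : I) (v y : Option O) :
    (Finset.univ.filter fun x => Function.update μ i v x = y).card
        + (if μ i = y then 1 else 0)
      = (Finset.univ.filter fun x => μ x = y).card + (if v = y then 1 else 0) := by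
  have hfun : (fun x => if Function.update μ i v x = y then 1 else 0)
      = Function.update (fun x => if μ x = y then 1 else 0) i (if v = y then 1 else 0) := by
    funext x; by_cases hx : x = i <;> simp [hx]
  rw [Finset.card_filter, Finset.card_filter, hfun,
    Finset.sum_update_of_mem (Finset.mem_univ i), ← Finset.add_sum_erase _ _ (Finset.mem_univ i)]
  simp only [Finset.sdiff_singleton_eq_erase]
  ring

lemma IsMatching.update {q : O → ℕ} {μ : I → Option O} (hm : IsMatching q μ) (i : I)
    {v : Option O} (hv : ∀ a, v = some a → (Finset.univ.filter fun x => μ x = some a).card < q a) :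
    IsMatching q (Function.update μ i v) := by
  intro a
  have h := card_filter_update_add μ i v (some a)
  by_cases hva : v = some a
  · have := hv a hva; split_ifs at h <;> omega
  · have := hm a; split_ifs at h <;> omega

variable {w : I → ℝ} {P : I → LinearOrder (Option O)} {q : O → ℕ} {μ : I → Option O}

lemma moreWPopular_of_prefers (hw : ∀ k, 0 < w k) {μ' : I → Option O} {i : I}
    (hi : Prefers (P i) (μ' i) (μ i)) {S : Finset I}
    (hS : ∀ k, Prefers (P k) (μ k) (μ' k) → k ∈ S) (hSw : ∑ k ∈ S, w k < w i) :
    MoreWPopular w P μ' μ := by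
  unfold MoreWPopular
  calc ∑ k ∈ Finset.univ.filter (fun k => Prefers (P k) (μ k) (μ' k)), w k
      ≤ ∑ k ∈ S, w k :=
        Finset.sum_le_sum_of_subset_of_nonneg (fun k hk => hS k (Finset.mem_filter.1 hk).2)
          (fun k _ _ => (hw k).le)
    _ < w i := hSw
    _ ≤ ∑ k ∈ Finset.univ.filter (fun k => Prefers (P k) (μ' k) (μ k)), w k :=
        Finset.single_le_sum (fun k _ => (hw k).le) (by simpa using hi)

lemma WPopular.not_prefers_update (hμ : WPopular w P q μ) (hw : ∀ k, 0 < w k) {i : I}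
    {v : Option O} (hm : IsMatching q (Function.update μ i v)) : ¬ Prefers (P i) v (μ i) := by
  intro hi
  refine hμ.2 _ hm (moreWPopular_of_prefers hw (i := i) (S := ∅) (by simpa using hi)
    (fun k hk => ?_) (by simpa using hw i))
  obtain rfl := eq_of_prefers_update hk
  exact absurd (by simpa using hk) hi.asymm

lemma WPopular.not_prefers_none (hμ : WPopular w P q μ) (hw : ∀ k, 0 < w k) (i : I) :
    ¬ Prefers (P i) none (μ i) :=
  hμ.not_prefers_update hw (hμ.1.update i (by simp))

lemma WPopular.nonWasteful (hμ : WPopular w P q μ) (hw : ∀ k, 0 < w k) : NonWasteful P q μ :=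
  fun i a ha => hμ.not_prefers_update hw (hμ.1.update i (by simpa using ha))

lemma WPopular.weight_le_of_prefers (hμ : WPopular w P q μ) (hw : ∀ k, 0 < w k) {i j : I}
    {a : O} (hi : Prefers (P i) (some a) (μ i)) (hj : μ j = some a) : w i ≤ w j := by
  by_contra! hlt
  have hν : (Finset.univ.filter fun x => Function.update μ j none x = some a).card
      < (Finset.univ.filter fun x => μ x = some a).card := by
    have := card_filter_update_add μ j none (some a)
    simp only [hj, if_true, reduceCtorEq, if_false] at this
    omega
  have hm := (hμ.1.update j (v := none) (by simp)).update i
    (fun b hb => Option.some.inj hb ▸ hν.trans_le (hμ.1 a))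
  refine hμ.2 _ hm (moreWPopular_of_prefers hw (i := i) (S := {j}) (by simpa using hi)
    (fun k hk => ?_) (by simpa using hlt))
  have hki : k ≠ i := by
    rintro rfl
    rw [Function.update_self] at hk
    exact hk.asymm hi
  rw [Function.update_of_ne hki] at hk
  exact Finset.mem_singleton.2 (eq_of_prefers_update hk)

end Matchings

section SerialDictatorship

variable {I O : Type} [Fintype I] [Fintype O]

lemma none_le_sdChoice (p : LinearOrder (Option O)) (rem : O → ℕ) :
    p.le none (sdChoice p rem) :=
  @Finset.le_max' _ p _ _ (Finset.mem_insert_self _ _)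

lemma some_le_sdChoice (p : LinearOrder (Option O)) {rem : O → ℕ} {a : O} (h : 0 < rem a) :
    p.le (some a) (sdChoice p rem) :=
  @Finset.le_max' _ p _ _ (by simp [h])

lemma pos_of_sdChoice_eq_some {p : LinearOrder (Option O)} {rem : O → ℕ} {a : O}
    (h : sdChoice p rem = some a) : 0 < rem a := by
  have hm : sdChoice p rem ∈
      insert none ((Finset.univ.filter fun b : O => 0 < rem b).image some) :=
    @Finset.max'_mem _ p _ _
  simpa [h] using hm

variable (e : Fin (Fintype.card I) ≃ I) (P : I → LinearOrder (Option O)) (q : O → ℕ)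

lemma sdState_fst_apply_eq_ite (k : ℕ) (i : I) : (sdState e P q k).1 i
    = if (e.symm i : ℕ) < k then sdChoice (P i) (sdState e P q (e.symm i)).2 else none := by
  induction k with
  | zero => rfl
  | succ k ih =>
    have hn := (e.symm i).isLt
    rw [sdState]
    by_cases hk : k < Fintype.card I
    · rw [dif_pos hk]
      dsimp only
      by_cases hi : i = e ⟨k, hk⟩
      · subst hi
        simp
      · have hik : (e.symm i : ℕ) ≠ k := fun h => hi (by simp [← h])
        rw [Function.update_of_ne hi, ih]
        exact if_congr (by omega) rfl rfl
    · rw [dif_neg hk, ih, if_pos (by omega), if_pos (by omega)]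

lemma SD_apply (i : I) : SD e P q i = sdChoice (P i) (sdState e P q (e.symm i)).2 := by
  rw [SD, sdState_fst_apply_eq_ite, if_pos (e.symm i).isLt]

lemma sdState_fst_apply (k : ℕ) (i : I) :
    (sdState e P q k).1 i = if (e.symm i : ℕ) < k then SD e P q i else none := by
  rw [sdState_fst_apply_eq_ite, SD_apply]

lemma card_filter_sdState_add (k : ℕ) (a : O) :
    (Finset.univ.filter fun i => (sdState e P q k).1 i = some a).card + (sdState e P q k).2 a
      = q a := by
  induction k with
  | zero => simp [sdState]
  | succ k ih =>
    rw [sdState]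
    by_cases hk : k < Fintype.card I
    · rw [dif_pos hk]
      dsimp only
      have h := card_filter_update_add (sdState e P q k).1 (e ⟨k, hk⟩)
        (sdChoice (P (e ⟨k, hk⟩)) (sdState e P q k).2) (some a)
      rw [sdState_fst_apply e P q k (e ⟨k, hk⟩), if_neg (by simp)] at h
      have hpos := @pos_of_sdChoice_eq_some _ _ (P (e ⟨k, hk⟩)) (sdState e P q k).2 a
      split_ifs at h ⊢ with hc <;> grind
    · rw [dif_neg hk, ih]

end SerialDictatorship

theorem eq_SD_of_envy_earlier {I O : Type} [Fintype I] [Fintype O]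
    (e : Fin (Fintype.card I) ≃ I) {P : I → LinearOrder (Option O)} {q : O → ℕ}
    {μ : I → Option O} (hm : IsMatching q μ) (hIR : ∀ i, ¬ Prefers (P i) none (μ i))
    (hNW : NonWasteful P q μ)
    (henvy : ∀ i j a, Prefers (P i) (some a) (μ i) → μ j = some a → e.symm j < e.symm i) :
    μ = SD e P q := by
  suffices h : ∀ k, ∀ i, (e.symm i : ℕ) < k → μ i = SD e P q i from
    funext fun i => h _ i (e.symm i).isLt
  intro k
  induction k with
  | zero => simp
  | succ k ih =>
    intro i hik
    rcases Nat.lt_succ_iff_lt_or_eq.1 hik with hik | hik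
    · exact ih i hik
    rw [SD_apply, hik]
    set rem := (sdState e P q k).2
    -- by induction, the agents before `i` hold the same objects under `μ` as under SD
    have hcap : ∀ b, ((Finset.univ.filter fun x => μ x = some b).filter
        fun x => (e.symm x : ℕ) < k).card + rem b = q b := by
      intro b
      rw [← card_filter_sdState_add e P q k b, Finset.filter_filter]
      congr 2
      ext x
      simp only [Finset.mem_filter, Finset.mem_univ, true_and, sdState_fst_apply]
      by_cases hx : (e.symm x : ℕ) < k <;> simp [hx, ih x]
    let _ := P i
    refine le_antisymm ?_ (not_lt.1 fun hlt => ?_)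
    · cases hμi : μ i with
      | none => exact none_le_sdChoice _ _
      | some b =>
        refine some_le_sdChoice _ ?_
        have hcard : ((Finset.univ.filter fun x => μ x = some b).filter
            fun x => (e.symm x : ℕ) < k).card < (Finset.univ.filter fun x => μ x = some b).card :=
          Finset.card_lt_card (Finset.filter_ssubset.2 ⟨i, by simp [hμi], by omega⟩)
        have := hm b
        have := hcap b
        omega
    · cases hc : sdChoice (P i) rem with
      | none => exact hIR i (hc ▸ hlt)
      | some a =>
        have hpos := pos_of_sdChoice_eq_some hc
        have hfull := not_lt.1 fun h => hNW i a h (hc ▸ hlt)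
        obtain ⟨j, hj, hjk⟩ : ∃ j ∈ Finset.univ.filter fun x => μ x = some a,
            ¬ (e.symm j : ℕ) < k := by
          by_contra! h
          rw [← Finset.filter_eq_self.2 h] at hfull
          have := hcap a
          omega
        have := henvy i j a (hc ▸ hlt) (Finset.mem_filter.1 hj).2
        rw [Fin.lt_def] at this
        omega

lemma WPopular.eq_SD {I O : Type} [Fintype I] [Fintype O] {w : I → ℝ} (hw : ∀ i, 0 < w i)
    (hd : DistinctWeights w) {P : I → LinearOrder (Option O)} {q : O → ℕ} {μ : I → Option O}
    (hμ : WPopular w P q μ) {e : Fin (Fintype.card I) ≃ I} (he : ConsistentOrder w e) :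
    μ = SD e P q := by
  refine eq_SD_of_envy_earlier e hμ.1 (hμ.not_prefers_none hw) (hμ.nonWasteful hw)
    fun i j a hi hj => ?_
  have hij : i ≠ j := by rintro rfl; exact Prefers.irrefl _ _ (hj ▸ hi)
  exact he j i ((hμ.weight_le_of_prefers hw hi hj).lt_of_ne (hd.ne hij))

lemma exists_consistentOrder {I : Type} [Fintype I] {w : I → ℝ} (hd : DistinctWeights w) :
    ∃ e : Fin (Fintype.card I) ≃ I, ConsistentOrder w e := by
  let _ : LinearOrder I := LinearOrder.lift' (fun i => -w i) (neg_injective.comp hd)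
  exact ⟨(monoEquivOfFin I rfl).toEquiv, fun i j h =>
    (monoEquivOfFin I rfl).symm.strictMono (show -w i < -w j by linarith)⟩

theorem stmt11_general {I O : Type} [Fintype I] [Fintype O]
    (w : I → ℝ) (hw : ∀ i, 0 < w i) (hd : DistinctWeights w)
    (P : I → LinearOrder (Option O)) (q : O → ℕ) :
    (∀ μ μ' : I → Option O, WPopular w P q μ → WPopular w P q μ' → μ = μ') ∧
    (∀ e' : Fin (Fintype.card I) ≃ I, ConsistentOrder w e' →
      ∀ μ : I → Option O, WPopular w P q μ → μ = SD e' P q) := by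
  obtain ⟨e, he⟩ := exists_consistentOrder hd
  exact ⟨fun μ μ' hμ hμ' => (hμ.eq_SD hw hd he).trans (hμ'.eq_SD hw hd he).symm,
    fun e' he' μ hμ => hμ.eq_SD hw hd he'⟩

/-- With distinct weights, at every problem there is at most one w-popular
matching, and when it exists it is the outcome of the serial dictatorship processing agents
in strictly decreasing order of their weights. -/
theorem stmt11 {I O : Type} [Fintype I] [Fintype O]
    (hI : 3 ≤ Fintype.card I) (hIO : Fintype.card I ≤ Fintype.card O)
    (w : I → ℝ) (hw : ∀ i, 0 < w i) (hd : DistinctWeights w)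
    (P : I → LinearOrder (Option O)) (q : O → ℕ) (hq : ValidCaps q) :
    (∀ μ μ' : I → Option O, WPopular w P q μ → WPopular w P q μ' → μ = μ') ∧
    (∀ e' : Fin (Fintype.card I) ≃ I, ConsistentOrder w e' →
      ∀ μ : I → Option O, WPopular w P q μ → μ = SD e' P q) :=
  stmt11_general w hw hd P q
end

section
/- Let ψ be the serial dictatorship for a fixed ordering of the agents. For every problem (P, q), the truthful profile P is a Nash equilibrium of the preference-reporting game induced by ψ at (P, q), and every Nash equilibrium P' at (P, q) satisfies ψ(P', q) = ψ(P, q). -/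
open scoped Classical

section AuxSD

variable {I O : Type} [Fintype I] [Fintype O]

/-- The set of available choices given remaining capacities. -/
noncomputable def avail (rem : O → ℕ) : Finset (Option O) :=
  insert none ((Finset.univ.filter fun a : O => 0 < rem a).image some)

lemma avail_nonempty (rem : O → ℕ) : (avail rem).Nonempty :=
  ⟨none, Finset.mem_insert_self _ _⟩

lemma sdChoice_mem (p : LinearOrder (Option O)) (rem : O → ℕ) :
    sdChoice p rem ∈ avail rem :=
  @Finset.max'_mem _ p _ _

lemma le_sdChoice (p : LinearOrder (Option O)) (rem : O → ℕ) {x : Option O}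
    (hx : x ∈ avail rem) : p.le x (sdChoice p rem) :=
  @Finset.le_max' _ p _ _ hx

lemma sdState_succ (e : Fin (Fintype.card I) ≃ I) (P : I → LinearOrder (Option O))
    (q : O → ℕ) (k : ℕ) (hk : k < Fintype.card I) :
    sdState e P q (k + 1) =
      (Function.update (sdState e P q k).1 (e ⟨k, hk⟩)
          (sdChoice (P (e ⟨k, hk⟩)) (sdState e P q k).2),
        fun a => if sdChoice (P (e ⟨k, hk⟩)) (sdState e P q k).2 = some a
          then (sdState e P q k).2 a - 1 else (sdState e P q k).2 a) := by
  simp only [sdState, dif_pos hk]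

lemma sdState_agree (e : Fin (Fintype.card I) ≃ I) (P P' : I → LinearOrder (Option O))
    (q : O → ℕ) (k : ℕ)
    (h : ∀ j : ℕ, ∀ hj : j < Fintype.card I, j < k → P (e ⟨j, hj⟩) = P' (e ⟨j, hj⟩)) :
    sdState e P q k = sdState e P' q k := by
  induction k with
  | zero => rfl
  | succ k ih =>
    have hk : sdState e P q k = sdState e P' q k :=
      ih fun j hj hjk => h j hj (Nat.lt_succ_of_lt hjk)
    by_cases hlt : k < Fintype.card I
    · rw [sdState_succ e P q k hlt, sdState_succ e P' q k hlt, hk,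
        h k hlt (Nat.lt_succ_self k)]
    · simp only [sdState, dif_neg hlt, hk]

lemma sdState_fst (e : Fin (Fintype.card I) ≃ I) (P : I → LinearOrder (Option O))
    (q : O → ℕ) {k : ℕ} (hk : k < Fintype.card I) {m : ℕ} (hm : k < m) :
    (sdState e P q m).1 (e ⟨k, hk⟩) =
      sdChoice (P (e ⟨k, hk⟩)) (sdState e P q k).2 := by
  induction m with
  | zero => omega
  | succ m ih =>
    rcases Nat.lt_or_ge k m with hkm | hkm
    · by_cases hlt : m < Fintype.card I
      · rw [sdState_succ e P q m hlt]
        have hne : e ⟨m, hlt⟩ ≠ e ⟨k, hk⟩ := by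
          intro hcontra
          have := e.injective hcontra
          simp only [Fin.mk.injEq] at this
          omega
        simp only [Function.update_of_ne (Ne.symm hne)]
        exact ih hkm
      · simp only [sdState, dif_neg hlt]
        exact ih hkm
    · have hkm' : k = m := by omega
      subst hkm'
      rw [sdState_succ e P q k hk]
      simp only [Function.update_self]

lemma SD_apply_s17 (e : Fin (Fintype.card I) ≃ I) (P : I → LinearOrder (Option O))
    (q : O → ℕ) {k : ℕ} (hk : k < Fintype.card I) :
    SD e P q (e ⟨k, hk⟩) = sdChoice (P (e ⟨k, hk⟩)) (sdState e P q k).2 :=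
  sdState_fst e P q hk hk

lemma SD_update_apply (e : Fin (Fintype.card I) ≃ I) (P : I → LinearOrder (Option O))
    (q : O → ℕ) {k : ℕ} (hk : k < Fintype.card I)
    (Pi : LinearOrder (Option O)) :
    SD e (Function.update P (e ⟨k, hk⟩) Pi) q (e ⟨k, hk⟩) =
      sdChoice Pi (sdState e P q k).2 := by
  have hagree : sdState e (Function.update P (e ⟨k, hk⟩) Pi) q k = sdState e P q k := by
    apply sdState_agree
    intro j hj hjk
    apply Function.update_of_ne
    intro hcontra
    have := e.injective hcontra
    simp only [Fin.mk.injEq] at this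
    omega
  rw [SD_apply_s17 e _ q hk, hagree, Function.update_self]

end AuxSD

/-- For a serial dictatorship, truth-telling is a Nash equilibrium of the
induced preference-reporting game, and every Nash equilibrium yields the truthful outcome. -/
theorem stmt17 {I O : Type} [Fintype I] [Fintype O]
    (hI : 3 ≤ Fintype.card I) (hIO : Fintype.card I ≤ Fintype.card O)
    (e' : Fin (Fintype.card I) ≃ I)
    (P : I → LinearOrder (Option O)) (q : O → ℕ) (hq : ValidCaps q) :
    NashEq (fun P q => SD e' P q) P q P ∧
    (∀ P' : I → LinearOrder (Option O), NashEq (fun P q => SD e' P q) P q P' →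
      SD e' P' q = SD e' P q) := by
  constructor
  · -- truth-telling is a Nash equilibrium (in fact, SD is strategy-proof)
    intro i P''i
    obtain ⟨k, rfl⟩ : ∃ k : Fin (Fintype.card I), e' k = i := ⟨e'.symm i, e'.apply_symm_apply i⟩
    have hk : (k : ℕ) < Fintype.card I := k.2
    have hEta : (⟨(k : ℕ), hk⟩ : Fin (Fintype.card I)) = k := rfl
    have h1 : SD e' P q (e' k) = sdChoice (P (e' k)) (sdState e' P q (k : ℕ)).2 := by
      rw [← hEta]; exact SD_apply_s17 e' P q hk
    have h2 : SD e' (Function.update P (e' k) P''i) q (e' k) =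
        sdChoice P''i (sdState e' P q (k : ℕ)).2 := by
      rw [← hEta]; exact SD_update_apply e' P q hk P''i
    simp only [Prefers, h1, h2]
    have hmem : sdChoice P''i (sdState e' P q (k : ℕ)).2 ∈ avail (sdState e' P q (k : ℕ)).2 :=
      sdChoice_mem _ _
    exact (@not_lt _ (P (e' k)) _ _).2 (le_sdChoice _ _ hmem)
  · -- every Nash equilibrium yields the truthful outcome
    intro P' hNE
    have key : ∀ k : ℕ, sdState e' P' q k = sdState e' P q k := by
      intro k
      induction k with
      | zero => rfl
      | succ k ih =>
        by_cases hk : k < Fintype.card I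
        · set i := e' ⟨k, hk⟩ with hi
          have hSD' : SD e' P' q i = sdChoice (P' i) (sdState e' P' q k).2 :=
            SD_apply_s17 e' P' q hk
          have hdev : SD e' (Function.update P' i (P i)) q i =
              sdChoice (P i) (sdState e' P' q k).2 :=
            SD_update_apply e' P' q hk (P i)
          have hne := hNE i (P i)
          simp only [Prefers, hSD', hdev] at hne
          have hle1 : (P i).le (sdChoice (P i) (sdState e' P' q k).2)
              (sdChoice (P' i) (sdState e' P' q k).2) := (@not_lt _ (P i) _ _).1 hne
          have hle2 : (P i).le (sdChoice (P' i) (sdState e' P' q k).2)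
              (sdChoice (P i) (sdState e' P' q k).2) :=
            le_sdChoice _ _ (sdChoice_mem _ _)
          have hchoice : sdChoice (P' i) (sdState e' P' q k).2 =
              sdChoice (P i) (sdState e' P' q k).2 :=
            @le_antisymm _ (P i).toPartialOrder _ _ hle2 hle1
          rw [sdState_succ e' P' q k hk, sdState_succ e' P q k hk, ← hi, hchoice, ih]
        · simp only [sdState, dif_neg hk, ih]
    funext i
    show (sdState e' P' q (Fintype.card I)).1 i = (sdState e' P q (Fintype.card I)).1 i
    rw [key]
end
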